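/- Let f and g be nonzero elements of the integral group ring ℤ[ℤ], and let P ∈ ℤ[ℤ × ℤ] be the product of the images of f and g under the ring homomorphisms induced by the group embeddings a ↦ (a, 0) and b ↦ (0, b). Then for every pair of integers (m₁, m₂), the maximum over all u, v ∈ supp(P) of m₁·(u₁ − v₁) + m₂·(u₂ − v₂) equals |m₁|·(max supp(f) − min supp(f)) + |m₂|·(max supp(g) − min supp(g)). -/

import Mathlib

private lemma coeff_prod (f g : AddMonoidAlgebra ℤ ℤ) (a b : ℤ) :
    (AddMonoidAlgebra.mapDomainRingHom ℤ (AddMonoidHom.inl ℤ ℤ) f *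
     AddMonoidAlgebra.mapDomainRingHom ℤ (AddMonoidHom.inr ℤ ℤ) g).coeff (a, b) = f.coeff a * g.coeff b := by
  have hinl : Function.Injective (AddMonoidHom.inl ℤ ℤ) := fun x y h => by
    simpa using congrArg Prod.fst h
  have hinr : Function.Injective (AddMonoidHom.inr ℤ ℤ) := fun x y h => by
    simpa using congrArg Prod.snd h
  rw [AddMonoidAlgebra.coeff_mul]
  simp only [AddMonoidAlgebra.mapDomainRingHom_apply, AddMonoidHom.toFun_eq_coe,
    Finsupp.mapDomain.addMonoidHom_apply, AddMonoidHom.coe_coe,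
    AddMonoidAlgebra.coeff_mapDomain]
  rw [Finsupp.sum_mapDomain_index_inj hinl]
  have : ∀ x c, (Finsupp.mapDomain (⇑(AddMonoidHom.inr ℤ ℤ)) g.coeff).sum
      (fun a₂ b₂ => if (AddMonoidHom.inl ℤ ℤ) x + a₂ = (a, b) then c * b₂ else 0)
      = if x = a then c * g.coeff b else 0 := by
    intro x c
    rw [Finsupp.sum_mapDomain_index_inj hinr]
    simp only [AddMonoidHom.inl_apply, AddMonoidHom.inr_apply, Prod.mk_add_mk, add_zero,
      zero_add, Prod.mk.injEq]
    rcases eq_or_ne x a with rfl | hx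
    · simp only [true_and, if_pos rfl]
      rw [Finsupp.sum_ite_eq' g.coeff b (fun _ d => c * d)]
      rcases eq_or_ne (g.coeff b) 0 with h0 | h0
      · simp [h0, Finsupp.mem_support_iff]
      · simp (config := {contextual := true})
    · simp [hx]
  simp_rw [this]
  rw [Finsupp.sum_ite_eq' f.coeff a (fun _ c => c * g.coeff b)]
  rcases eq_or_ne (f.coeff a) 0 with h0 | h0
  · simp [h0, Finsupp.mem_support_iff]
  · simp (config := {contextual := true})

private lemma slope_bound (m lo hi x y : ℤ) (hx1 : lo ≤ x) (hx2 : x ≤ hi)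
    (hy1 : lo ≤ y) (hy2 : y ≤ hi) : m * (x - y) ≤ |m| * (hi - lo) := by
  calc m * (x - y) ≤ |m * (x - y)| := le_abs_self _
    _ = |m| * |x - y| := abs_mul _ _
    _ ≤ |m| * (hi - lo) := by
        apply mul_le_mul_of_nonneg_left _ (abs_nonneg m)
        rw [abs_sub_le_iff]
        omega

theorem alexander_norm_of_product_polynomial
    (f g : AddMonoidAlgebra ℤ ℤ) (hf : f ≠ 0) (hg : g ≠ 0)
    (P : AddMonoidAlgebra ℤ (ℤ × ℤ))
    (hP : P = AddMonoidAlgebra.mapDomainRingHom ℤ (AddMonoidHom.inl ℤ ℤ) f *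
        AddMonoidAlgebra.mapDomainRingHom ℤ (AddMonoidHom.inr ℤ ℤ) g)
    (m₁ m₂ : ℤ) :
    sSup ((fun q : (ℤ × ℤ) × (ℤ × ℤ) =>
        m₁ * (q.1.1 - q.2.1) + m₂ * (q.1.2 - q.2.2)) ''
        ((P.coeff.support : Set (ℤ × ℤ)) ×ˢ (P.coeff.support : Set (ℤ × ℤ)))) =
      |m₁| * (f.coeff.support.max'
            (Finsupp.support_nonempty_iff.mpr (mt AddMonoidAlgebra.coeff_eq_zero.mp hf)) -
          f.coeff.support.min'
            (Finsupp.support_nonempty_iff.mpr (mt AddMonoidAlgebra.coeff_eq_zero.mp hf))) +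
      |m₂| * (g.coeff.support.max'
            (Finsupp.support_nonempty_iff.mpr (mt AddMonoidAlgebra.coeff_eq_zero.mp hg)) -
          g.coeff.support.min'
            (Finsupp.support_nonempty_iff.mpr (mt AddMonoidAlgebra.coeff_eq_zero.mp hg))) := by
  have hfne := Finsupp.support_nonempty_iff.mpr (mt AddMonoidAlgebra.coeff_eq_zero.mp hf)
  have hgne := Finsupp.support_nonempty_iff.mpr (mt AddMonoidAlgebra.coeff_eq_zero.mp hg)
  set A := f.coeff.support.max' hfne with hA
  set a := f.coeff.support.min' hfne with ha
  set B := g.coeff.support.max' hgne with hB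
  set b := g.coeff.support.min' hgne with hb
  -- support of P
  have hsupp : ∀ u : ℤ × ℤ, u ∈ P.coeff.support ↔ u.1 ∈ f.coeff.support ∧ u.2 ∈ g.coeff.support := by
    intro u
    simp only [Finsupp.mem_support_iff, hP]
    rw [show u = (u.1, u.2) from rfl, coeff_prod]
    exact mul_ne_zero_iff
  -- the achiever
  set x₁ : ℤ := if 0 ≤ m₁ then A else a with hx₁
  set x₂ : ℤ := if 0 ≤ m₁ then a else A with hx₂
  set y₁ : ℤ := if 0 ≤ m₂ then B else b with hy₁
  set y₂ : ℤ := if 0 ≤ m₂ then b else B with hy₂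
  have hx₁f : x₁ ∈ f.coeff.support := by
    rw [hx₁]; split <;> [exact f.coeff.support.max'_mem hfne; exact f.coeff.support.min'_mem hfne]
  have hx₂f : x₂ ∈ f.coeff.support := by
    rw [hx₂]; split <;> [exact f.coeff.support.min'_mem hfne; exact f.coeff.support.max'_mem hfne]
  have hy₁g : y₁ ∈ g.coeff.support := by
    rw [hy₁]; split <;> [exact g.coeff.support.max'_mem hgne; exact g.coeff.support.min'_mem hgne]
  have hy₂g : y₂ ∈ g.coeff.support := by
    rw [hy₂]; split <;> [exact g.coeff.support.min'_mem hgne; exact g.coeff.support.max'_mem hgne]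
  have hval : m₁ * (x₁ - x₂) + m₂ * (y₁ - y₂) = |m₁| * (A - a) + |m₂| * (B - b) := by
    rw [hx₁, hx₂, hy₁, hy₂]
    rcases le_or_gt 0 m₁ with h1 | h1 <;> rcases le_or_gt 0 m₂ with h2 | h2 <;>
      simp [h1, h2, not_le.mpr, abs_of_nonneg, abs_of_neg] <;> ring
  set S := ((fun q : (ℤ × ℤ) × (ℤ × ℤ) =>
      m₁ * (q.1.1 - q.2.1) + m₂ * (q.1.2 - q.2.2)) ''
      ((P.coeff.support : Set (ℤ × ℤ)) ×ˢ (P.coeff.support : Set (ℤ × ℤ)))) with hS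
  have hmem : |m₁| * (A - a) + |m₂| * (B - b) ∈ S := by
    rw [hS]
    refine ⟨((x₁, y₁), (x₂, y₂)), ⟨?_, ?_⟩, hval⟩
    · exact (hsupp (x₁, y₁)).mpr ⟨hx₁f, hy₁g⟩
    · exact (hsupp (x₂, y₂)).mpr ⟨hx₂f, hy₂g⟩
  have hfin : S.Finite := Set.Finite.image _
    (Set.Finite.prod (P.coeff.support.finite_toSet) (P.coeff.support.finite_toSet))
  refine le_antisymm (csSup_le ⟨_, hmem⟩ ?_) (le_csSup (Set.Finite.bddAbove hfin) hmem)
  rintro z ⟨⟨u, v⟩, ⟨hu, hv⟩, rfl⟩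
  obtain ⟨hu1, hu2⟩ := (hsupp u).mp hu
  obtain ⟨hv1, hv2⟩ := (hsupp v).mp hv
  have b1 := slope_bound m₁ a A u.1 v.1 (f.coeff.support.min'_le _ hu1)
    (f.coeff.support.le_max' _ hu1) (f.coeff.support.min'_le _ hv1) (f.coeff.support.le_max' _ hv1)
  have b2 := slope_bound m₂ b B u.2 v.2 (g.coeff.support.min'_le _ hu2)
    (g.coeff.support.le_max' _ hu2) (g.coeff.support.min'_le _ hv2) (g.coeff.support.le_max' _ hv2)
  exact add_le_add b1 b2
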